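/- arXiv:1608.08753 — 2 statements merged into one kernel-verified Lean document; each statement's English description precedes it below -/
import Mathlib

section
/- Let D be the N×K matrix with entries d_{i,j} = ⟨p_j − r_i, n_j⟩, where r_1,…,r_N ∈ ℝ^d are measurement points, n_1,…,n_K ∈ ℝ^d are unit wall normals, and p_1,…,p_K ∈ ℝ^d are wall points. Then rank(D) ≤ d + 1. -/
open RealInnerProductSpace Module

/-
Row `i` of `D` is `q - L (r i)`, where `q j = ⟪p j, n j⟫` and `L : ℝ^d → ℝ^K` is the linear map
`x ↦ (⟪x, n j⟫)_j`. Hence every row lies in `range L ⊔ span {q}`, a subspace of dimension at most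
`d + 1`, and the rank of a matrix is the dimension of the span of its rows.
-/

theorem Matrix.rank_le_finrank_of_row_mem {K m n : Type*} [Field K] [Finite m] [Fintype n]
    (A : Matrix m n K) (S : Submodule K (n → K)) (hA : ∀ i, A i ∈ S) :
    A.rank ≤ finrank K S := by
  rw [A.rank_eq_finrank_span_row]
  exact Submodule.finrank_mono (Submodule.span_le.2 (Set.range_subset_iff.2 hA))

theorem rank_inner_sub_le {E m n : Type*} [NormedAddCommGroup E] [InnerProductSpace ℝ E]
    [FiniteDimensional ℝ E] [Finite m] [Fintype n] (r : m → E) (u p : n → E) :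
    (Matrix.of fun i j => ⟪p j - r i, u j⟫).rank ≤ finrank ℝ E + 1 := by
  let L : E →ₗ[ℝ] n → ℝ := LinearMap.pi fun j => innerₗ E (u j)
  let q : n → ℝ := fun j => ⟪p j, u j⟫
  have hrow : ∀ i, (Matrix.of fun i j => ⟪p j - r i, u j⟫) i = q - L (r i) := by
    intro i
    ext j
    simp [L, q, inner_sub_left, real_inner_comm]
  calc (Matrix.of fun i j => ⟪p j - r i, u j⟫).rank
      ≤ finrank ℝ ↥(LinearMap.range L ⊔ Submodule.span ℝ {q}) :=
        Matrix.rank_le_finrank_of_row_mem _ _ fun i => hrow i ▸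
          sub_mem (Submodule.mem_sup_right (Submodule.mem_span_singleton_self q))
            (Submodule.mem_sup_left (LinearMap.mem_range_self L (r i)))
    _ ≤ finrank ℝ (LinearMap.range L) + finrank ℝ (Submodule.span ℝ {q}) :=
        Submodule.finrank_add_le_finrank_add_finrank _ _
    _ ≤ finrank ℝ E + 1 :=
        add_le_add (LinearMap.finrank_range_le L) ((finrank_span_le_card {q}).trans (by simp))

theorem rank_distance_matrix_le_general (d N K : ℕ)
    (r : Fin N → EuclideanSpace ℝ (Fin d))
    (n p : Fin K → EuclideanSpace ℝ (Fin d))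
    (D : Matrix (Fin N) (Fin K) ℝ)
    (hD : ∀ i j, D i j = ⟪p j - r i, n j⟫) :
    D.rank ≤ d + 1 := by
  have hD' : D = Matrix.of fun i j => ⟪p j - r i, n j⟫ := Matrix.ext hD
  simpa [hD'] using rank_inner_sub_le r n p

/-- The matrix of wall distances `d_{i,j} = ⟪p_j − r_i, n_j⟫` has rank at most `d + 1`. -/
theorem rank_distance_matrix_le (d N K : ℕ)
    (r : Fin N → EuclideanSpace ℝ (Fin d))
    (n p : Fin K → EuclideanSpace ℝ (Fin d))
    (hn : ∀ j, ‖n j‖ = 1)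
    (D : Matrix (Fin N) (Fin K) ℝ)
    (hD : ∀ i j, D i j = ⟪p j - r i, n j⟫) :
    D.rank ≤ d + 1 :=
  rank_distance_matrix_le_general d N K r n p D hD
end

section
/- Suppose trajectory points r_1, …, r_N ∈ ℝ² are collinear: r_i = a + t_i u for a unit vector u and scalars t_i. Let F be the reflection of ℝ² across the line through a with direction u. Then the reflected configuration m_j = F₀ n_j (where F₀ is the linear part of F), s_i = F(r_i) = r_i, and q'_j = q_j − ⟨n_j, a⟩ + ⟨m_j, a⟩ satisfies q'_j − ⟨m_j, s_i⟩ = q_j − ⟨n_j, r_i⟩ for all i, j, while in general m_j ≠ n_j; hence collinear trajectories admit a nontrivial reflection ambiguity in room reconstruction from first-order echo distances. -/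
open RealInnerProductSpace

/-- Collinear trajectories admit a reflection ambiguity: if `r_i = a + t_i u` with `u`
a unit vector, and `F₀ v = 2⟪v, u⟫ u − v` is the linear reflection fixing `u`, then the
configuration `m_j = F₀ (n_j)`, `s_i = r_i`, `q'_j = q_j − ⟪n_j, a⟫ + ⟪m_j, a⟫` yields
the same measurements `q'_j − ⟪m_j, s_i⟫ = q_j − ⟪n_j, r_i⟫`; moreover `m_j = n_j`
forces `n_j` to be parallel to `u`, so in general `m_j ≠ n_j`. -/
theorem collinear_reflection_ambiguity (N K : ℕ)
    (n : Fin K → EuclideanSpace ℝ (Fin 2)) (hn : ∀ j, ‖n j‖ = 1)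
    (q : Fin K → ℝ)
    (a u : EuclideanSpace ℝ (Fin 2)) (hu : ‖u‖ = 1)
    (tc : Fin N → ℝ)
    (r : Fin N → EuclideanSpace ℝ (Fin 2)) (hr : ∀ i, r i = a + tc i • u)
    (F₀ : EuclideanSpace ℝ (Fin 2) → EuclideanSpace ℝ (Fin 2))
    (hF₀ : ∀ v, F₀ v = (2 * ⟪v, u⟫) • u - v)
    (m : Fin K → EuclideanSpace ℝ (Fin 2)) (hm : ∀ j, m j = F₀ (n j))
    (s : Fin N → EuclideanSpace ℝ (Fin 2)) (hs : ∀ i, s i = r i)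
    (q' : Fin K → ℝ) (hq' : ∀ j, q' j = q j - ⟪n j, a⟫ + ⟪m j, a⟫) :
    (∀ i j, q' j - ⟪m j, s i⟫ = q j - ⟪n j, r i⟫) ∧
    (∀ j, m j = n j → n j = ⟪n j, u⟫ • u) := by
  have huu : ⟪u, u⟫ = 1 := by
    rw [real_inner_self_eq_norm_sq, hu]; norm_num
  constructor
  · intro i j
    have hmu : ⟪m j, u⟫ = ⟪n j, u⟫ := by
      rw [hm, hF₀]
      rw [inner_sub_left, real_inner_smul_left, huu]
      ring
    rw [hq', hs, hr, inner_add_right, inner_add_right, inner_smul_right,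
      inner_smul_right, hmu]
    ring
  · intro j h
    have h2 : n j = (2 * ⟪n j, u⟫) • u - n j := by
      have h2 := (hm j).trans (hF₀ (n j))
      rw [h] at h2; exact h2
    have : (2:ℝ) • n j = (2 * ⟪n j, u⟫) • u := by
      have := congrArg (· + n j) h2
      simpa [two_smul, sub_add_cancel, add_comm] using this
    have h3 : n j = ⟪n j, u⟫ • u := by
      have := congrArg (fun x => (2:ℝ)⁻¹ • x) this
      simpa [smul_smul, mul_assoc] using this
    exact h3
end
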